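/- arXiv:0801.1966 — 2 statements merged into one kernel-verified Lean document; each statement's English description precedes it below -/
import Mathlib

section
/- Let X be a nonempty set, T : X → X a map, 𝒦 a T-invariant set of gambles on X (f ∈ 𝒦 implies f∘T ∈ 𝒦), and let L : 𝒦 → ℝ be a weakly T-invariant lower prevision (L(f∘T) ≥ L(f) for all f ∈ 𝒦) that avoids sure loss. Let 𝓜(L) denote the set of coherent previsions Q on all gambles with Q(f) ≥ L(f) for all f ∈ 𝒦. Then the set of all T-invariant coherent previsions on X that dominate L on 𝒦 (coherent previsions P with P(f∘T) = P(f) for all gambles f and P ≥ L on 𝒦) equals { Q_B : Q ∈ 𝓜(L), B a Banach limit on ℕ }, where Q_B(f) := B(n ↦ Q(f∘T^n)). Consequently, the point-wise smallest strongly T-invariant coherent lower prevision on all gambles dominating L on 𝒦 is given, for every gamble f, by inf_{Q ∈ 𝓜(L)} sup_{n≥1} inf_{k≥0} (1/n) Σ_{ℓ=k}^{k+n−1} Q(f∘T^ℓ). -/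
def IsGamble {X : Type*} (f : X → ℝ) : Prop :=
  BddAbove (Set.range f) ∧ BddBelow (Set.range f)

def IsCoherentLowerPrevision {X : Type*} (L : (X → ℝ) → ℝ) : Prop :=
  (∀ f : X → ℝ, IsGamble f → sInf (Set.range f) ≤ L f) ∧
  (∀ f g : X → ℝ, IsGamble f → IsGamble g → L f + L g ≤ L (f + g)) ∧
  (∀ f : X → ℝ, IsGamble f → ∀ c : ℝ, 0 ≤ c → L (c • f) = c * L f)

def IsCoherentPrevision {X : Type*} (P : (X → ℝ) → ℝ) : Prop :=
  (∀ f g : X → ℝ, IsGamble f → IsGamble g → P (f + g) = P f + P g) ∧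
  (∀ f : X → ℝ, IsGamble f → sInf (Set.range f) ≤ P f)

def IsTransformationMonoid {X : Type*} (𝒯 : Set (X → X)) : Prop :=
  id ∈ 𝒯 ∧ ∀ S ∈ 𝒯, ∀ T ∈ 𝒯, S ∘ T ∈ 𝒯

def Dominating {X : Type*} (L : (X → ℝ) → ℝ) : Set ((X → ℝ) → ℝ) :=
  {P | IsCoherentPrevision P ∧ ∀ f : X → ℝ, IsGamble f → L f ≤ P f}

def AvoidsSureLoss {X : Type*} (𝒦 : Set (X → ℝ)) (L : (X → ℝ) → ℝ) : Prop :=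
  ∀ (n : ℕ) (lam : Fin n → ℝ) (fs : Fin n → X → ℝ),
    (∀ k, 0 ≤ lam k) → (∀ k, fs k ∈ 𝒦) →
    0 ≤ ⨆ x : X, ∑ k, lam k * (fs k x - L (fs k))

noncomputable def NatExt {X : Type*} (𝒦 : Set (X → ℝ)) (L : (X → ℝ) → ℝ)
    (g : X → ℝ) : ℝ :=
  sSup {α : ℝ | ∃ (n : ℕ) (lam : Fin n → ℝ) (fs : Fin n → X → ℝ),
    (∀ k, 0 ≤ lam k) ∧ (∀ k, fs k ∈ 𝒦) ∧
    α = ⨅ x : X, (g x - ∑ k, lam k * (fs k x - L (fs k)))}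

def IsBanachLimit (B : (ℕ → ℝ) → ℝ) : Prop :=
  IsCoherentPrevision B ∧
  ∀ g : ℕ → ℝ, IsGamble g → B (fun n => g (n + 1)) = B g

/-!
An invariant prevision `P ≥ L` is its own Banach-limit average, since its orbits `P (f ∘ Tⁿ)` are
constant; conversely, shift invariance of a Banach limit `B` makes `Q_B` invariant, and `Q_B ≥ L`
on `𝒦` because `L` increases along orbits.

For the lower envelope, every `Q ∈ 𝓜(L)` yields the coherent lower prevision
`f ↦ lowerMean (Q (f ∘ Tⁿ))ₙ`, where `lowerMean a` is `sup_d inf_k` of the averages of `a` over the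
windows `[k, k + d)`. It is superadditive because long windows split into shorter ones, and strongly
invariant because window averages of a telescoping sequence are `O(1/d)`. The infimum over `𝓜(L)`
is the smallest such lower prevision: a strongly invariant coherent `M'` is attained at `f` by a
dominating prevision (lower envelope theorem, via Hahn–Banach), which is automatically invariant,
so its orbit of `f` is constantly `M' f`. The same envelope theorem, applied to `lowerMean` and to
the natural extension of `L`, produces Banach limits and shows that `𝓜(L)` is nonempty.
-/

open Set Filter Topology

section Gambles

variable {X Y : Type*} {f g : X → ℝ}

lemma isGamble_iff_abs_le : IsGamble f ↔ ∃ C, ∀ x, |f x| ≤ C := by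
  rw [IsGamble, and_comm, ← isBounded_iff_bddBelow_bddAbove, isBounded_iff_forall_norm_le]
  simp only [forall_mem_range, Real.norm_eq_abs]

lemma isGamble_const (c : ℝ) : IsGamble (fun _ : X => c) :=
  isGamble_iff_abs_le.2 ⟨|c|, fun _ => le_rfl⟩

lemma IsGamble.add (hf : IsGamble f) (hg : IsGamble g) : IsGamble (f + g) := by
  obtain ⟨C, hC⟩ := isGamble_iff_abs_le.1 hf
  obtain ⟨D, hD⟩ := isGamble_iff_abs_le.1 hg
  exact isGamble_iff_abs_le.2 ⟨C + D, fun x => (abs_add_le _ _).trans (add_le_add (hC x) (hD x))⟩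

lemma IsGamble.smul (c : ℝ) (hf : IsGamble f) : IsGamble (c • f) := by
  obtain ⟨C, hC⟩ := isGamble_iff_abs_le.1 hf
  refine isGamble_iff_abs_le.2 ⟨|c| * C, fun x => ?_⟩
  rw [Pi.smul_apply, smul_eq_mul, abs_mul]
  exact mul_le_mul_of_nonneg_left (hC x) (abs_nonneg c)

lemma IsGamble.comp (hf : IsGamble f) (T : Y → X) : IsGamble (f ∘ T) := by
  obtain ⟨C, hC⟩ := isGamble_iff_abs_le.1 hf
  exact isGamble_iff_abs_le.2 ⟨C, fun y => hC (T y)⟩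

lemma IsGamble.sInf_range_le (hf : IsGamble f) (x : X) : sInf (range f) ≤ f x :=
  csInf_le hf.2 (mem_range_self x)

variable (X) in
def gambleSubmodule : Submodule ℝ (X → ℝ) where
  carrier := {f | IsGamble f}
  add_mem' := IsGamble.add
  zero_mem' := isGamble_const 0
  smul_mem' := fun c _ hf => hf.smul c

lemma IsGamble.neg (hf : IsGamble f) : IsGamble (-f) :=
  (gambleSubmodule X).neg_mem hf

lemma IsGamble.sub (hf : IsGamble f) (hg : IsGamble g) : IsGamble (f - g) :=
  (gambleSubmodule X).sub_mem hf hg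

end Gambles

section Previsions

variable {X : Type*} {M P : (X → ℝ) → ℝ} {f g : X → ℝ}

lemma IsCoherentLowerPrevision.le_apply [Nonempty X] (hM : IsCoherentLowerPrevision M)
    (hf : IsGamble f) {c : ℝ} (h : ∀ x, c ≤ f x) : c ≤ M f :=
  (le_csInf (range_nonempty f) (forall_mem_range.2 h)).trans (hM.1 f hf)

lemma IsCoherentLowerPrevision.of_smul_pos [Nonempty X]
    (hinf : ∀ f : X → ℝ, IsGamble f → sInf (range f) ≤ M f)
    (hadd : ∀ f g : X → ℝ, IsGamble f → IsGamble g → M f + M g ≤ M (f + g))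
    (hsmul : ∀ f : X → ℝ, IsGamble f → ∀ c : ℝ, 0 < c → M (c • f) = c * M f) :
    IsCoherentLowerPrevision M := by
  refine ⟨hinf, hadd, fun f hf c hc => hc.eq_or_lt.elim (fun hc0 => ?_) (hsmul f hf c)⟩
  have hM0 : M 0 = 0 := le_antisymm
    (by simpa using hadd 0 0 (isGamble_const 0) (isGamble_const 0))
    (by simpa using hinf 0 (isGamble_const 0))
  rw [← hc0, zero_smul, zero_mul, hM0]

lemma bddBelow_range_apply {ι : Sort*} {M : ι → (X → ℝ) → ℝ}
    (hM : ∀ i, IsCoherentLowerPrevision (M i)) (hf : IsGamble f) :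
    BddBelow (range fun i => M i f) :=
  ⟨sInf (range f), forall_mem_range.2 fun i => (hM i).1 f hf⟩

lemma isCoherentLowerPrevision_iInf {ι : Sort*} [Nonempty ι] {M : ι → (X → ℝ) → ℝ}
    (hM : ∀ i, IsCoherentLowerPrevision (M i)) :
    IsCoherentLowerPrevision fun f => ⨅ i, M i f := by
  refine ⟨fun f hf => le_ciInf fun i => (hM i).1 f hf, fun f g hf hg => ?_, fun f hf c hc => ?_⟩
  · exact le_ciInf fun i => (add_le_add (ciInf_le (bddBelow_range_apply hM hf) i)
      (ciInf_le (bddBelow_range_apply hM hg) i)).trans ((hM i).2.1 f g hf hg)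
  · simp only [(hM _).2.2 f hf c hc, Real.mul_iInf_of_nonneg hc]

namespace IsCoherentPrevision

variable (hP : IsCoherentPrevision P)
include hP

lemma map_zero : P 0 = 0 := by
  simpa using hP.1 0 0 (isGamble_const 0) (isGamble_const 0)

lemma map_neg (hf : IsGamble f) : P (-f) = -P f := by
  have := hP.1 f (-f) hf hf.neg
  rw [add_neg_cancel, hP.map_zero] at this
  linarith

lemma map_sub (hf : IsGamble f) (hg : IsGamble g) : P (f - g) = P f - P g := by
  rw [sub_eq_add_neg, hP.1 f (-g) hf hg.neg, hP.map_neg hg, sub_eq_add_neg]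

lemma abs_apply_le [Nonempty X] {C : ℝ} (hC : ∀ x, |f x| ≤ C) : |P f| ≤ C := by
  have hf : IsGamble f := isGamble_iff_abs_le.2 ⟨C, hC⟩
  have hlow (g : X → ℝ) (hg : IsGamble g) (h : ∀ x, -C ≤ g x) : -C ≤ P g :=
    (le_csInf (range_nonempty g) (forall_mem_range.2 h)).trans (hP.2 g hg)
  have h₁ := hlow f hf fun x => (abs_le.1 (hC x)).1
  have h₂ := hlow (-f) hf.neg fun x => neg_le_neg (abs_le.1 (hC x)).2
  rw [hP.map_neg hf] at h₂
  exact abs_le.2 ⟨h₁, by linarith⟩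

-- `c ↦ P (c • f)` is additive and bounded by a multiple of `|c|`, hence continuous, hence linear.
lemma map_smul [Nonempty X] (hf : IsGamble f) (c : ℝ) : P (c • f) = c * P f := by
  obtain ⟨C, hC⟩ := isGamble_iff_abs_le.1 hf
  let φ : ℝ →+ ℝ :=
    { toFun := fun c => P (c • f)
      map_zero' := by rw [zero_smul, hP.map_zero]
      map_add' := fun a b => by rw [add_smul]; exact hP.1 _ _ (hf.smul a) (hf.smul b) }
  have hφ : Continuous φ := AddMonoidHomClass.continuous_of_bound φ C fun c => by
    refine hP.abs_apply_le fun x => ?_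
    rw [Pi.smul_apply, smul_eq_mul, abs_mul, Real.norm_eq_abs, mul_comm]
    exact mul_le_mul_of_nonneg_right (hC x) (abs_nonneg c)
  simpa [φ] using map_real_smul φ hφ c 1

lemma isCoherentLowerPrevision [Nonempty X] : IsCoherentLowerPrevision P :=
  ⟨hP.2, fun f g hf hg => (hP.1 f g hf hg).ge, fun _ hf c _ => hP.map_smul hf c⟩

lemma apply_const [Nonempty X] (c : ℝ) : P (fun _ => c) = c := by
  have h₁ := hP.isCoherentLowerPrevision.le_apply (isGamble_const c) fun _ => le_rfl
  have h₂ := hP.isCoherentLowerPrevision.le_apply (isGamble_const c).neg (c := -c) fun _ => le_rfl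
  rw [hP.map_neg (isGamble_const c)] at h₂
  linarith

lemma congr {P' : (X → ℝ) → ℝ} (h : ∀ f, IsGamble f → P f = P' f) : IsCoherentPrevision P' :=
  ⟨fun f g hf hg => by rw [← h f hf, ← h g hg, ← h _ (hf.add hg), hP.1 f g hf hg],
    fun f hf => (h f hf) ▸ hP.2 f hf⟩

end IsCoherentPrevision

end Previsions

theorem exists_linearMap_le_sublinear_eq {E : Type*} [AddCommGroup E] [Module ℝ E] (N : E → ℝ)
    (N_hom : ∀ c : ℝ, 0 < c → ∀ x, N (c • x) = c * N x) (N_add : ∀ x y, N (x + y) ≤ N x + N y)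
    (x₀ : E) : ∃ ψ : E →ₗ[ℝ] ℝ, (∀ x, ψ x ≤ N x) ∧ ψ x₀ = N x₀ := by
  have N_zero : N 0 = 0 := by
    have := N_hom 2 two_pos 0
    rw [smul_zero] at this
    linarith
  have hwd : ∀ c : ℝ, c • x₀ = 0 → c • N x₀ = 0 := fun c hc => by
    rcases smul_eq_zero.1 hc with rfl | rfl
    · exact zero_smul ℝ _
    · rw [N_zero, smul_zero]
  let ψ₀ : E →ₗ.[ℝ] ℝ := LinearPMap.mkSpanSingleton' x₀ (N x₀) hwd
  have hψ₀ : ∀ x : ψ₀.domain, ψ₀ x ≤ N x := by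
    rintro ⟨x, hx⟩
    obtain ⟨c, rfl⟩ := Submodule.mem_span_singleton.1 hx
    rw [LinearPMap.mkSpanSingleton'_apply, RingHom.id_apply, smul_eq_mul]
    rcases lt_trichotomy c 0 with hc | rfl | hc
    · have h₁ : N (c • x₀) = -c * N (-x₀) := by
        rw [← N_hom (-c) (neg_pos.2 hc), neg_smul_neg]
      have h₂ := N_add x₀ (-x₀)
      rw [add_neg_cancel, N_zero] at h₂
      rw [h₁]
      nlinarith
    · simp [N_zero]
    · rw [N_hom c hc]
  obtain ⟨ψ, hψ, hψN⟩ := exists_extension_of_le_sublinear ψ₀ N N_hom N_add hψ₀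
  refine ⟨ψ, hψN, ?_⟩
  rw [← ψ₀.domain.coe_mk x₀ (Submodule.mem_span_singleton_self _), hψ]
  exact LinearPMap.mkSpanSingleton'_apply_self _ _ _ _

section Envelope

variable {X : Type*} {M : (X → ℝ) → ℝ}

-- The lower envelope theorem, by Hahn–Banach applied to the sublinear functional `g ↦ -M (-g)`.
theorem IsCoherentLowerPrevision.exists_le_eq (hM : IsCoherentLowerPrevision M)
    {h : X → ℝ} (hh : IsGamble h) :
    ∃ P, IsCoherentPrevision P ∧ (∀ f, IsGamble f → M f ≤ P f) ∧ P h = M h := by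
  classical
  let N : gambleSubmodule X → ℝ := fun g => -M (-g)
  have N_hom : ∀ c : ℝ, 0 < c → ∀ g, N (c • g) = c * N g := fun c hc g => by
    simp only [N, Submodule.coe_smul, ← smul_neg, hM.2.2 _ (neg_mem g.2) c hc.le, mul_neg]
  have N_add : ∀ g g', N (g + g') ≤ N g + N g' := fun g g' => by
    have := hM.2.1 _ _ (neg_mem g.2) (neg_mem g'.2)
    simp only [N, Submodule.coe_add, neg_add]
    linarith
  obtain ⟨ψ, hψN, hψh⟩ := exists_linearMap_le_sublinear_eq N N_hom N_add (-⟨h, hh⟩)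
  have hMψ (g : gambleSubmodule X) : M g ≤ ψ g := by
    have := hψN (-g)
    simp only [N, map_neg, Submodule.coe_neg, neg_neg] at this
    linarith
  let P : (X → ℝ) → ℝ := fun f => if hf : f ∈ gambleSubmodule X then ψ ⟨f, hf⟩ else 0
  have hP (f : X → ℝ) (hf : IsGamble f) : P f = ψ ⟨f, hf⟩ := dif_pos hf
  refine ⟨P, ⟨fun f g hf hg => ?_, fun f hf => ?_⟩, fun f hf => hP f hf ▸ hMψ ⟨f, hf⟩, ?_⟩
  · rw [hP f hf, hP g hg, hP _ (hf.add hg)]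
    exact map_add ψ ⟨f, hf⟩ ⟨g, hg⟩
  · exact (hM.1 f hf).trans (hP f hf ▸ hMψ ⟨f, hf⟩)
  · simp only [N, map_neg, Submodule.coe_neg, neg_neg, neg_inj] at hψh
    rw [hP h hh, hψh]

end Envelope

section MarkovMap

variable {X Y : Type*}

-- A positive unital linear map; positivity and unitality together are the condition `sInf_le`.
structure IsMarkovMap (Φ : (X → ℝ) → Y → ℝ) : Prop where
  isGamble : ∀ f, IsGamble f → IsGamble (Φ f)
  map_add : ∀ f g, IsGamble f → IsGamble g → Φ (f + g) = Φ f + Φ g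
  map_smul : ∀ f, IsGamble f → ∀ c : ℝ, 0 ≤ c → Φ (c • f) = c • Φ f
  sInf_le : ∀ f, IsGamble f → ∀ y, sInf (range f) ≤ Φ f y

variable [Nonempty Y] {Φ : (X → ℝ) → Y → ℝ} (hΦ : IsMarkovMap Φ)
include hΦ

lemma IsCoherentLowerPrevision.comp_isMarkovMap {Λ : (Y → ℝ) → ℝ}
    (hΛ : IsCoherentLowerPrevision Λ) : IsCoherentLowerPrevision fun f => Λ (Φ f) := by
  refine ⟨fun f hf => hΛ.le_apply (hΦ.isGamble f hf) (hΦ.sInf_le f hf), fun f g hf hg => ?_,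
    fun f hf c hc => ?_⟩
  · dsimp only
    rw [hΦ.map_add f g hf hg]
    exact hΛ.2.1 _ _ (hΦ.isGamble f hf) (hΦ.isGamble g hg)
  · dsimp only
    rw [hΦ.map_smul f hf c hc]
    exact hΛ.2.2 _ (hΦ.isGamble f hf) c hc

lemma IsCoherentPrevision.comp_isMarkovMap {Λ : (Y → ℝ) → ℝ} (hΛ : IsCoherentPrevision Λ) :
    IsCoherentPrevision fun f => Λ (Φ f) := by
  refine ⟨fun f g hf hg => ?_, fun f hf => ?_⟩
  · dsimp only
    rw [hΦ.map_add f g hf hg]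
    exact hΛ.1 _ _ (hΦ.isGamble f hf) (hΦ.isGamble g hg)
  · exact hΛ.isCoherentLowerPrevision.le_apply (hΦ.isGamble f hf) (hΦ.sInf_le f hf)

end MarkovMap

section Orbits

variable {X : Type*} {T : X → X} {Q : (X → ℝ) → ℝ} {f : X → ℝ}

lemma comp_iterate_succ (f : X → ℝ) (T : X → X) (n : ℕ) : f ∘ T^[n + 1] = (f ∘ T) ∘ T^[n] := by
  rw [Function.iterate_succ']
  rfl

lemma isMarkovMap_orbit [Nonempty X] (hQ : IsCoherentPrevision Q) :
    IsMarkovMap fun (f : X → ℝ) (n : ℕ) => Q (f ∘ T^[n]) where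
  isGamble f hf := by
    obtain ⟨C, hC⟩ := isGamble_iff_abs_le.1 hf
    exact isGamble_iff_abs_le.2 ⟨C, fun n => hQ.abs_apply_le fun x => hC _⟩
  map_add f g hf hg := funext fun n => hQ.1 _ _ (hf.comp _) (hg.comp _)
  map_smul f hf c _ := funext fun n => hQ.map_smul (hf.comp _) c
  sInf_le f hf n := hQ.isCoherentLowerPrevision.le_apply (hf.comp _) fun x => hf.sInf_range_le _

lemma apply_comp_iterate_eq (hT : ∀ g, IsGamble g → Q (g ∘ T) = Q g) (hf : IsGamble f) (n : ℕ) :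
    Q (f ∘ T^[n]) = Q f := by
  induction n with
  | zero => rfl
  | succ n ih => exact (hT _ (hf.comp _)).trans ih

variable {𝒦 : Set (X → ℝ)} {L : (X → ℝ) → ℝ}

lemma comp_iterate_mem (h𝒦T : ∀ f ∈ 𝒦, f ∘ T ∈ 𝒦) (hf : f ∈ 𝒦) (n : ℕ) : f ∘ T^[n] ∈ 𝒦 := by
  induction n with
  | zero => exact hf
  | succ n ih => exact h𝒦T _ ih

lemma le_apply_comp_iterate (h𝒦T : ∀ f ∈ 𝒦, f ∘ T ∈ 𝒦) (hweak : ∀ f ∈ 𝒦, L f ≤ L (f ∘ T))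
    (hf : f ∈ 𝒦) (n : ℕ) : L f ≤ L (f ∘ T^[n]) := by
  induction n with
  | zero => rfl
  | succ n ih => exact ih.trans (hweak _ (comp_iterate_mem h𝒦T hf n))

end Orbits

section LowerMean

noncomputable def windowAvg (a : ℕ → ℝ) (d k : ℕ) : ℝ := (∑ ℓ ∈ Finset.range d, a (k + ℓ)) / d

noncomputable def minWindowAvg (a : ℕ → ℝ) (d : ℕ) : ℝ := ⨅ k, windowAvg a d k

/-- Lorentz's lower mean of a bounded sequence. -/
noncomputable def lowerMean (a : ℕ → ℝ) : ℝ := ⨆ n : ℕ, minWindowAvg a (n + 1)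

variable {a b : ℕ → ℝ} {c : ℝ} {d : ℕ}

lemma lowerMean_eq (a : ℕ → ℝ) :
    lowerMean a = ⨆ n : ℕ, ⨅ k : ℕ, (∑ ℓ ∈ Finset.range (n + 1), a (k + ℓ)) / ((n : ℝ) + 1) := by
  simp only [lowerMean, minWindowAvg, windowAvg, Nat.cast_add_one]

lemma le_windowAvg (h : ∀ n, c ≤ a n) (hd : 0 < d) (k : ℕ) : c ≤ windowAvg a d k := by
  rw [windowAvg, le_div_iff₀ (by exact_mod_cast hd), mul_comm]
  simpa using Finset.card_nsmul_le_sum (Finset.range d) (fun ℓ => a (k + ℓ)) c fun ℓ _ => h _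

lemma windowAvg_le (h : ∀ n, a n ≤ c) (hd : 0 < d) (k : ℕ) : windowAvg a d k ≤ c := by
  rw [windowAvg, div_le_iff₀ (by exact_mod_cast hd), mul_comm]
  simpa using Finset.sum_le_card_nsmul (Finset.range d) (fun ℓ => a (k + ℓ)) c fun ℓ _ => h _

lemma windowAvg_const (hd : 0 < d) (k : ℕ) : windowAvg (fun _ => c) d k = c :=
  le_antisymm (windowAvg_le (fun _ => le_rfl) hd k) (le_windowAvg (fun _ => le_rfl) hd k)

lemma windowAvg_add (d k : ℕ) : windowAvg (a + b) d k = windowAvg a d k + windowAvg b d k := by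
  simp only [windowAvg, Pi.add_apply, Finset.sum_add_distrib, add_div]

lemma windowAvg_smul (c : ℝ) (d k : ℕ) : windowAvg (c • a) d k = c * windowAvg a d k := by
  simp only [windowAvg, Pi.smul_apply, smul_eq_mul, ← Finset.mul_sum, mul_div_assoc]

lemma windowAvg_sub_shift (a : ℕ → ℝ) (d k : ℕ) :
    windowAvg (fun n => a n - a (n + 1)) d k = (a k - a (k + d)) / d := by
  rw [windowAvg]
  congr 1
  exact Finset.sum_range_sub' (fun ℓ => a (k + ℓ)) d

lemma sum_range_mul_eq_sum_sum (a : ℕ → ℝ) (d e k : ℕ) :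
    ∑ ℓ ∈ Finset.range (d * e), a (k + ℓ) =
      ∑ j ∈ Finset.range e, ∑ ℓ ∈ Finset.range d, a (k + j * d + ℓ) := by
  induction e with
  | zero => simp
  | succ e ih =>
    rw [Nat.mul_succ, Finset.sum_range_add, ih, Finset.sum_range_succ]
    congr 1
    exact Finset.sum_congr rfl fun ℓ _ => by rw [mul_comm, add_assoc]

lemma le_minWindowAvg (h : ∀ n, c ≤ a n) (hd : 0 < d) : c ≤ minWindowAvg a d :=
  le_ciInf (le_windowAvg h hd)

variable (ha : IsGamble a)
include ha

lemma bddBelow_range_windowAvg (hd : 0 < d) : BddBelow (range (windowAvg a d)) :=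
  ⟨sInf (range a), forall_mem_range.2 (le_windowAvg ha.sInf_range_le hd)⟩

lemma bddAbove_range_minWindowAvg : BddAbove (range fun n : ℕ => minWindowAvg a (n + 1)) :=
  ⟨sSup (range a), forall_mem_range.2 fun n =>
    (ciInf_le (bddBelow_range_windowAvg ha n.succ_pos) 0).trans
      (windowAvg_le (fun m => le_csSup ha.1 (mem_range_self m)) n.succ_pos 0)⟩

lemma minWindowAvg_le_lowerMean (hd : 0 < d) : minWindowAvg a d ≤ lowerMean a := by
  obtain ⟨n, rfl⟩ := Nat.exists_eq_add_one.2 hd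
  exact le_ciSup (bddAbove_range_minWindowAvg ha) n

lemma le_lowerMean (h : ∀ n, c ≤ a n) : c ≤ lowerMean a :=
  (le_minWindowAvg h one_pos).trans (minWindowAvg_le_lowerMean ha one_pos)

-- A window of length `d * e` is the union of `e` windows of length `d`.
lemma minWindowAvg_le_mul (hd : 0 < d) {e : ℕ} (he : 0 < e) :
    minWindowAvg a d ≤ minWindowAvg a (d * e) := by
  refine le_ciInf fun k => ?_
  have hwin (j : ℕ) : minWindowAvg a d * d ≤ ∑ ℓ ∈ Finset.range d, a (k + j * d + ℓ) :=
    (le_div_iff₀ (by exact_mod_cast hd)).1 (ciInf_le (bddBelow_range_windowAvg ha hd) _)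
  rw [windowAvg, sum_range_mul_eq_sum_sum, le_div_iff₀ (by positivity)]
  calc minWindowAvg a d * ↑(d * e) = ∑ _j ∈ Finset.range e, minWindowAvg a d * d := by
        simp only [Finset.sum_const, Finset.card_range, nsmul_eq_mul, Nat.cast_mul]; ring
    _ ≤ _ := Finset.sum_le_sum fun j _ => hwin j

lemma lowerMean_add_le (hb : IsGamble b) : lowerMean a + lowerMean b ≤ lowerMean (a + b) := by
  refine ciSup_add_ciSup_le fun i j => ?_
  have hd : 0 < (i + 1) * (j + 1) := by positivity
  calc minWindowAvg a (i + 1) + minWindowAvg b (j + 1)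
      ≤ minWindowAvg a ((i + 1) * (j + 1)) + minWindowAvg b ((i + 1) * (j + 1)) := by
        gcongr
        · exact minWindowAvg_le_mul ha i.succ_pos j.succ_pos
        · exact mul_comm (j + 1) (i + 1) ▸ minWindowAvg_le_mul hb j.succ_pos i.succ_pos
    _ ≤ minWindowAvg (a + b) ((i + 1) * (j + 1)) := le_ciInf fun k => by
        rw [windowAvg_add]
        exact add_le_add (ciInf_le (bddBelow_range_windowAvg ha hd) k)
          (ciInf_le (bddBelow_range_windowAvg hb hd) k)
    _ ≤ lowerMean (a + b) := minWindowAvg_le_lowerMean (ha.add hb) hd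

lemma lowerMean_sub_shift_nonneg : 0 ≤ lowerMean fun n => a n - a (n + 1) := by
  obtain ⟨C, hC⟩ := isGamble_iff_abs_le.1 ha
  have hgap : IsGamble fun n => a n - a (n + 1) := ha.sub (ha.comp Nat.succ)
  have hbound (n : ℕ) : -(2 * C) * (1 / ((n : ℝ) + 1)) ≤ lowerMean fun n => a n - a (n + 1) := by
    refine le_trans ?_ (minWindowAvg_le_lowerMean hgap n.succ_pos)
    refine le_ciInf fun k => ?_
    rw [windowAvg_sub_shift, Nat.cast_add_one, ← mul_div_assoc, mul_one]
    gcongr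
    linarith [(abs_le.1 (hC k)).1, (abs_le.1 (hC (k + (n + 1)))).2]
  have hlim : Tendsto (fun n : ℕ => -(2 * C) * (1 / ((n : ℝ) + 1))) atTop (𝓝 0) := by
    simpa using tendsto_one_div_add_atTop_nhds_zero_nat.const_mul (-(2 * C))
  exact le_of_tendsto' hlim hbound

omit ha in
lemma lowerMean_const (c : ℝ) : lowerMean (fun _ => c) = c := by
  simp only [lowerMean, minWindowAvg, windowAvg_const (Nat.succ_pos _), ciInf_const, ciSup_const]

omit ha in
lemma isCoherentLowerPrevision_lowerMean : IsCoherentLowerPrevision lowerMean := by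
  refine ⟨fun a ha => le_lowerMean ha ha.sInf_range_le, fun a b ha hb => lowerMean_add_le ha hb,
    fun a _ c hc => ?_⟩
  simp only [lowerMean, minWindowAvg, windowAvg_smul, Real.mul_iInf_of_nonneg hc,
    Real.mul_iSup_of_nonneg hc]

end LowerMean

section BanachLimit

theorem exists_isBanachLimit : ∃ B, IsBanachLimit B := by
  obtain ⟨B, hB, hBmean, -⟩ :=
    isCoherentLowerPrevision_lowerMean.exists_le_eq (isGamble_const (0 : ℝ))
  refine ⟨B, hB, fun a ha => ?_⟩
  have hshift : IsGamble fun n => a (n + 1) := ha.comp Nat.succ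
  have h₁ : 0 ≤ B (a - fun n => a (n + 1)) :=
    (lowerMean_sub_shift_nonneg ha).trans (hBmean _ (ha.sub hshift))
  have h₂ : 0 ≤ B (-a - -fun n => a (n + 1)) :=
    (lowerMean_sub_shift_nonneg ha.neg).trans (hBmean _ (ha.neg.sub hshift.neg))
  rw [hB.map_sub ha hshift] at h₁
  rw [hB.map_sub ha.neg hshift.neg, hB.map_neg ha, hB.map_neg hshift] at h₂
  linarith

lemma IsBanachLimit.apply_orbit_comp {X : Type*} [Nonempty X] {T : X → X}
    {Q : (X → ℝ) → ℝ} {B : (ℕ → ℝ) → ℝ} (hB : IsBanachLimit B) (hQ : IsCoherentPrevision Q)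
    {f : X → ℝ} (hf : IsGamble f) :
    B (fun n => Q ((f ∘ T) ∘ T^[n])) = B fun n => Q (f ∘ T^[n]) := by
  simpa only [comp_iterate_succ] using hB.2 _ ((isMarkovMap_orbit (T := T) hQ).isGamble f hf)

end BanachLimit

section NaturalExtension

variable {X : Type*} {𝒦 : Set (X → ℝ)} {L : (X → ℝ) → ℝ} {g : X → ℝ}

def natExtSet (𝒦 : Set (X → ℝ)) (L : (X → ℝ) → ℝ) (g : X → ℝ) : Set ℝ :=
  {α : ℝ | ∃ (n : ℕ) (lam : Fin n → ℝ) (fs : Fin n → X → ℝ),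
    (∀ k, 0 ≤ lam k) ∧ (∀ k, fs k ∈ 𝒦) ∧
    α = ⨅ x : X, (g x - ∑ k, lam k * (fs k x - L (fs k)))}

lemma natExt_eq_sSup : NatExt 𝒦 L g = sSup (natExtSet 𝒦 L g) := rfl

lemma sInf_range_mem_natExtSet (g : X → ℝ) : sInf (range g) ∈ natExtSet 𝒦 L g :=
  ⟨0, Fin.elim0, Fin.elim0, fun k => k.elim0, fun k => k.elim0, by simp [iInf]⟩

lemma apply_mem_natExtSet [Nonempty X] {f : X → ℝ} (hf : f ∈ 𝒦) : L f ∈ natExtSet 𝒦 L f :=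
  ⟨1, fun _ => 1, fun _ => f, fun _ => zero_le_one, fun _ => hf, by simp [ciInf_const]⟩

lemma smul_mem_natExtSet {c α : ℝ} (hc : 0 ≤ c) (hα : α ∈ natExtSet 𝒦 L g) :
    c * α ∈ natExtSet 𝒦 L (c • g) := by
  obtain ⟨n, lam, fs, hlam, hfs, rfl⟩ := hα
  refine ⟨n, c • lam, fs, fun k => mul_nonneg hc (hlam k), hfs, ?_⟩
  rw [Real.mul_iInf_of_nonneg hc]
  simp only [Pi.smul_apply, smul_eq_mul, mul_sub, Finset.mul_sum, mul_assoc]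

def credalSet (𝒦 : Set (X → ℝ)) (L : (X → ℝ) → ℝ) : Set ((X → ℝ) → ℝ) :=
  {Q | IsCoherentPrevision Q ∧ ∀ f ∈ 𝒦, L f ≤ Q f}

variable (h𝒦g : ∀ f ∈ 𝒦, IsGamble f)
include h𝒦g

lemma isGamble_gain {n : ℕ} (lam : Fin n → ℝ) {fs : Fin n → X → ℝ} (hfs : ∀ k, fs k ∈ 𝒦) :
    IsGamble fun x => ∑ k, lam k * (fs k x - L (fs k)) := by
  have hsum : (fun x => ∑ k, lam k * (fs k x - L (fs k))) =
      ∑ k, lam k • (fs k - fun _ => L (fs k)) := by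
    ext x
    simp [Finset.sum_apply]
  rw [hsum]
  exact (gambleSubmodule X).sum_mem fun k _ =>
    ((h𝒦g _ (hfs k)).sub (isGamble_const (L (fs k)))).smul (lam k)

lemma iInf_sub_gain_le [Nonempty X] (hasl : AvoidsSureLoss 𝒦 L) (hg : IsGamble g) {n : ℕ}
    {lam : Fin n → ℝ} {fs : Fin n → X → ℝ} (hlam : ∀ k, 0 ≤ lam k) (hfs : ∀ k, fs k ∈ 𝒦) :
    ⨅ x, (g x - ∑ k, lam k * (fs k x - L (fs k))) ≤ sSup (range g) := by
  have hsure := hasl n lam fs hlam hfs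
  set s : X → ℝ := fun x => ∑ k, lam k * (fs k x - L (fs k))
  have hs : IsGamble s := isGamble_gain h𝒦g lam hfs
  have hle : ⨆ x, s x ≤ sSup (range g) - ⨅ x, (g x - s x) := ciSup_le fun x => by
    have h₁ : ⨅ y, (g y - s y) ≤ g x - s x := ciInf_le (hg.sub hs).2 x
    linarith [le_csSup hg.1 (mem_range_self x)]
  linarith

lemma exists_add_mem_natExtSet [Nonempty X] {f : X → ℝ} (hf : IsGamble f) (hg : IsGamble g)
    {α β : ℝ} (hα : α ∈ natExtSet 𝒦 L f) (hβ : β ∈ natExtSet 𝒦 L g) :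
    ∃ γ ∈ natExtSet 𝒦 L (f + g), α + β ≤ γ := by
  obtain ⟨n, lam, fs, hlam, hfs, rfl⟩ := hα
  obtain ⟨m, mu, gs, hmu, hgs, rfl⟩ := hβ
  refine ⟨_, ⟨n + m, Fin.append lam mu, Fin.append fs gs, Fin.addCases (by simpa using hlam)
    (by simpa using hmu), Fin.addCases (by simpa using hfs) (by simpa using hgs), rfl⟩,
    le_ciInf fun x => ?_⟩
  have h₁ : ⨅ y, (f y - ∑ k, lam k * (fs k y - L (fs k))) ≤
      f x - ∑ k, lam k * (fs k x - L (fs k)) :=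
    ciInf_le (hf.sub (isGamble_gain h𝒦g lam hfs)).2 x
  have h₂ : ⨅ y, (g y - ∑ k, mu k * (gs k y - L (gs k))) ≤
      g x - ∑ k, mu k * (gs k x - L (gs k)) :=
    ciInf_le (hg.sub (isGamble_gain h𝒦g mu hgs)).2 x
  simp only [Pi.add_apply, Fin.sum_univ_add, Fin.append_left, Fin.append_right]
  linarith

variable [Nonempty X] (hasl : AvoidsSureLoss 𝒦 L)
include hasl

lemma bddAbove_natExtSet (hg : IsGamble g) : BddAbove (natExtSet 𝒦 L g) := by
  refine ⟨sSup (range g), ?_⟩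
  rintro _ ⟨n, lam, fs, hlam, hfs, rfl⟩
  exact iInf_sub_gain_le h𝒦g hasl hg hlam hfs

lemma le_natExt {f : X → ℝ} (hf : f ∈ 𝒦) : L f ≤ NatExt 𝒦 L f :=
  le_csSup (bddAbove_natExtSet h𝒦g hasl (h𝒦g f hf)) (apply_mem_natExtSet hf)

lemma isCoherentLowerPrevision_natExt : IsCoherentLowerPrevision (NatExt 𝒦 L) := by
  have hne (g : X → ℝ) : (natExtSet 𝒦 L g).Nonempty := ⟨_, sInf_range_mem_natExtSet g⟩
  have hmul {c : ℝ} (hc : 0 < c) {g : X → ℝ} (hg : IsGamble g) :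
      c * NatExt 𝒦 L g ≤ NatExt 𝒦 L (c • g) := by
    rw [← le_div_iff₀' hc]
    refine csSup_le (hne g) fun α hα => (le_div_iff₀' hc).2 ?_
    exact le_csSup (bddAbove_natExtSet h𝒦g hasl (hg.smul c)) (smul_mem_natExtSet hc.le hα)
  refine .of_smul_pos (fun g hg => ?_) (fun f g hf hg => ?_) (fun g hg c hc => ?_)
  · exact le_csSup (bddAbove_natExtSet h𝒦g hasl hg) (sInf_range_mem_natExtSet g)
  · rw [natExt_eq_sSup, natExt_eq_sSup, ← csSup_add (hne f) (bddAbove_natExtSet h𝒦g hasl hf)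
      (hne g) (bddAbove_natExtSet h𝒦g hasl hg)]
    refine csSup_le ((hne f).add (hne g)) ?_
    rintro _ ⟨α, hα, β, hβ, rfl⟩
    obtain ⟨γ, hγ, hle⟩ := exists_add_mem_natExtSet h𝒦g hf hg hα hβ
    exact hle.trans (le_csSup (bddAbove_natExtSet h𝒦g hasl (hf.add hg)) hγ)
  · refine le_antisymm ?_ (hmul hc hg)
    have := hmul (inv_pos.2 hc) (hg.smul c)
    rwa [smul_smul, inv_mul_cancel₀ hc.ne', one_smul, inv_mul_le_iff₀ hc] at this

theorem nonempty_credalSet : (credalSet 𝒦 L).Nonempty := by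
  obtain ⟨Q, hQ, hQN, -⟩ :=
    (isCoherentLowerPrevision_natExt h𝒦g hasl).exists_le_eq (isGamble_const (0 : ℝ))
  exact ⟨Q, hQ, fun f hf => (le_natExt h𝒦g hasl hf).trans (hQN f (h𝒦g f hf))⟩

end NaturalExtension

section InvariantExtension

variable {X : Type*} {T : X → X} {𝒦 : Set (X → ℝ)} {L : (X → ℝ) → ℝ}

def IsStronglyInvariant (T : X → X) (M : (X → ℝ) → ℝ) : Prop :=
  ∀ f, IsGamble f → 0 ≤ M (f - f ∘ T) ∧ 0 ≤ M (f ∘ T - f)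

-- Every prevision dominating a strongly invariant `M` is invariant, since it is linear.
theorem IsCoherentLowerPrevision.exists_invariant_le_eq {M : (X → ℝ) → ℝ}
    (hM : IsCoherentLowerPrevision M) (hMT : IsStronglyInvariant T M) {h : X → ℝ}
    (hh : IsGamble h) :
    ∃ P, IsCoherentPrevision P ∧ (∀ g, IsGamble g → P (g ∘ T) = P g) ∧
      (∀ f, IsGamble f → M f ≤ P f) ∧ P h = M h := by
  obtain ⟨P, hP, hPM, hPh⟩ := hM.exists_le_eq hh
  refine ⟨P, hP, fun g hg => ?_, hPM, hPh⟩
  have h₁ := (hMT g hg).1.trans (hPM _ (hg.sub (hg.comp T)))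
  have h₂ := (hMT g hg).2.trans (hPM _ ((hg.comp T).sub hg))
  rw [hP.map_sub hg (hg.comp T)] at h₁
  rw [hP.map_sub (hg.comp T) hg] at h₂
  linarith

noncomputable def invariantExtension (T : X → X) (𝒦 : Set (X → ℝ)) (L : (X → ℝ) → ℝ)
    (f : X → ℝ) : ℝ :=
  ⨅ Q : credalSet 𝒦 L, lowerMean fun n => Q.1 (f ∘ T^[n])

lemma invariantExtension_eq_sInf (f : X → ℝ) :
    invariantExtension T 𝒦 L f = sInf {r : ℝ | ∃ Q : (X → ℝ) → ℝ,
      (IsCoherentPrevision Q ∧ ∀ g ∈ 𝒦, L g ≤ Q g) ∧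
      r = ⨆ n : ℕ, ⨅ k : ℕ,
        (∑ ℓ ∈ Finset.range (n + 1), Q (f ∘ T^[k + ℓ])) / ((n : ℝ) + 1)} := by
  rw [invariantExtension,
    ← sInf_image' (s := credalSet 𝒦 L) (f := fun Q => lowerMean fun n => Q (f ∘ T^[n]))]
  congr 1
  ext r
  simp only [mem_image, lowerMean_eq, eq_comm]
  rfl

variable [Nonempty X]

lemma isStronglyInvariant_lowerMean_orbit {Q : (X → ℝ) → ℝ} (hQ : IsCoherentPrevision Q) :
    IsStronglyInvariant T fun f => lowerMean fun n => Q (f ∘ T^[n]) := by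
  intro f hf
  have hΦ := isMarkovMap_orbit (T := T) hQ
  have hshift (n : ℕ) : (f ∘ T) ∘ T^[n] = f ∘ T^[n + 1] := (comp_iterate_succ f T n).symm
  constructor
  · have := lowerMean_sub_shift_nonneg (hΦ.isGamble f hf)
    simp only [← hshift, ← hQ.map_sub (hf.comp _) ((hf.comp T).comp _)] at this
    exact this
  · have := lowerMean_sub_shift_nonneg (hΦ.isGamble f hf).neg
    simp only [Pi.neg_apply, neg_sub_neg, ← hshift,
      ← hQ.map_sub ((hf.comp T).comp _) (hf.comp _)] at this
    exact this

lemma isCoherentLowerPrevision_lowerMean_orbit {Q : (X → ℝ) → ℝ} (hQ : IsCoherentPrevision Q) :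
    IsCoherentLowerPrevision fun f => lowerMean fun n => Q (f ∘ T^[n]) :=
  isCoherentLowerPrevision_lowerMean.comp_isMarkovMap (isMarkovMap_orbit hQ)

lemma isCoherentLowerPrevision_invariantExtension [Nonempty (credalSet 𝒦 L)] :
    IsCoherentLowerPrevision (invariantExtension T 𝒦 L) :=
  isCoherentLowerPrevision_iInf fun Q => isCoherentLowerPrevision_lowerMean_orbit Q.2.1

lemma isStronglyInvariant_invariantExtension [Nonempty (credalSet 𝒦 L)] :
    IsStronglyInvariant T (invariantExtension T 𝒦 L) := fun f hf =>
  ⟨le_ciInf fun Q => (isStronglyInvariant_lowerMean_orbit Q.2.1 f hf).1,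
    le_ciInf fun Q => (isStronglyInvariant_lowerMean_orbit Q.2.1 f hf).2⟩

lemma le_invariantExtension [Nonempty (credalSet 𝒦 L)] (h𝒦g : ∀ f ∈ 𝒦, IsGamble f)
    (h𝒦T : ∀ f ∈ 𝒦, f ∘ T ∈ 𝒦) (hweak : ∀ f ∈ 𝒦, L f ≤ L (f ∘ T)) {f : X → ℝ} (hf : f ∈ 𝒦) :
    L f ≤ invariantExtension T 𝒦 L f :=
  le_ciInf fun Q => le_lowerMean ((isMarkovMap_orbit Q.2.1).isGamble f (h𝒦g f hf)) fun n =>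
    (le_apply_comp_iterate h𝒦T hweak hf n).trans (Q.2.2 _ (comp_iterate_mem h𝒦T hf n))

lemma invariantExtension_le (h𝒦g : ∀ f ∈ 𝒦, IsGamble f) {M : (X → ℝ) → ℝ}
    (hM : IsCoherentLowerPrevision M) (hMT : IsStronglyInvariant T M)
    (hML : ∀ f ∈ 𝒦, L f ≤ M f) {f : X → ℝ} (hf : IsGamble f) :
    invariantExtension T 𝒦 L f ≤ M f := by
  obtain ⟨Q, hQ, hQT, hQM, hQf⟩ := hM.exists_invariant_le_eq hMT hf
  have hQL : Q ∈ credalSet 𝒦 L := ⟨hQ, fun g hg => (hML g hg).trans (hQM g (h𝒦g g hg))⟩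
  calc invariantExtension T 𝒦 L f ≤ lowerMean fun n => Q (f ∘ T^[n]) :=
        ciInf_le (bddBelow_range_apply (fun Q : credalSet 𝒦 L =>
          isCoherentLowerPrevision_lowerMean_orbit Q.2.1) hf) ⟨Q, hQL⟩
    _ = M f := by simp only [apply_comp_iterate_eq hQT hf, hQf, lowerMean_const]

end InvariantExtension

theorem stmt17 (X : Type*) [Nonempty X] (T : X → X)
    (𝒦 : Set (X → ℝ)) (h𝒦g : ∀ f ∈ 𝒦, IsGamble f) (h𝒦T : ∀ f ∈ 𝒦, f ∘ T ∈ 𝒦)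
    (L : (X → ℝ) → ℝ) (hasl : AvoidsSureLoss 𝒦 L)
    (hweak : ∀ f ∈ 𝒦, L f ≤ L (f ∘ T)) :
    (∀ P : (X → ℝ) → ℝ,
      (IsCoherentPrevision P ∧ (∀ f : X → ℝ, IsGamble f → P (f ∘ T) = P f) ∧
        (∀ f ∈ 𝒦, L f ≤ P f)) ↔
      (∃ Q : (X → ℝ) → ℝ, (IsCoherentPrevision Q ∧ ∀ f ∈ 𝒦, L f ≤ Q f) ∧
        ∃ B : (ℕ → ℝ) → ℝ, IsBanachLimit B ∧
          ∀ f : X → ℝ, IsGamble f → P f = B (fun n => Q (f ∘ T^[n])))) ∧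
    (∃ M : (X → ℝ) → ℝ, IsCoherentLowerPrevision M ∧
      (∀ f : X → ℝ, IsGamble f → 0 ≤ M (f - f ∘ T) ∧ 0 ≤ M (f ∘ T - f)) ∧
      (∀ f ∈ 𝒦, L f ≤ M f) ∧
      (∀ M' : (X → ℝ) → ℝ, IsCoherentLowerPrevision M' →
        (∀ f : X → ℝ, IsGamble f → 0 ≤ M' (f - f ∘ T) ∧ 0 ≤ M' (f ∘ T - f)) →
        (∀ f ∈ 𝒦, L f ≤ M' f) →
        ∀ f : X → ℝ, IsGamble f → M f ≤ M' f) ∧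
      (∀ f : X → ℝ, IsGamble f →
        M f = sInf {r : ℝ | ∃ Q : (X → ℝ) → ℝ,
          (IsCoherentPrevision Q ∧ ∀ g ∈ 𝒦, L g ≤ Q g) ∧
          r = ⨆ n : ℕ, ⨅ k : ℕ,
            (∑ ℓ ∈ Finset.range (n+1), Q (f ∘ T^[k + ℓ])) / ((n : ℝ) + 1)})) := by
  have : Nonempty (credalSet 𝒦 L) := (nonempty_credalSet h𝒦g hasl).to_subtype
  refine ⟨fun P => ⟨fun ⟨hP, hPT, hPL⟩ => ?_, fun ⟨Q, ⟨hQ, hQL⟩, B, hB, hPB⟩ => ?_⟩,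
    ⟨invariantExtension T 𝒦 L, isCoherentLowerPrevision_invariantExtension,
      isStronglyInvariant_invariantExtension, fun f => le_invariantExtension h𝒦g h𝒦T hweak,
      fun M hM hMT hML f hf => invariantExtension_le h𝒦g hM hMT hML hf,
      fun f _ => invariantExtension_eq_sInf f⟩⟩
  · obtain ⟨B, hB⟩ := exists_isBanachLimit
    refine ⟨P, ⟨hP, hPL⟩, B, hB, fun f hf => ?_⟩
    simp only [apply_comp_iterate_eq hPT hf, hB.1.apply_const]
  · have hΦ := isMarkovMap_orbit (T := T) hQ
    refine ⟨(hB.1.comp_isMarkovMap hΦ).congr fun f hf => (hPB f hf).symm, fun f hf => ?_,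
      fun f hf => ?_⟩
    · rw [hPB _ (hf.comp T), hPB f hf, hB.apply_orbit_comp hQ hf]
    · rw [hPB f (h𝒦g f hf)]
      exact hB.1.isCoherentLowerPrevision.le_apply (hΦ.isGamble f (h𝒦g f hf)) fun n =>
        (le_apply_comp_iterate h𝒦T hweak hf n).trans (hQL _ (comp_iterate_mem h𝒦T hf n))
end

section
/- Let X be a finite nonempty set and 𝒫 a group of permutations of X. Let 𝒜 denote the set of 𝒫-invariant atoms of X (for a group of permutations these are exactly the orbits of 𝒫 on X), which is a finite partition of X. A coherent lower prevision L on X is strongly 𝒫-invariant (L(f − f∘π) ≥ 0 and L(f∘π − f) ≥ 0 for every gamble f and π ∈ 𝒫) if and only if there exists a coherent lower prevision L₀ on the finite set 𝒜 such that L(f) = L₀( A ↦ (1/|A|) Σ_{x∈A} f(x) ) for every gamble f on X, i.e. L is obtained by applying L₀ to the function sending each invariant atom A to the uniform average of f over A. -/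
def InvariantAtoms {X : Type*} (𝒢 : Set (X → X)) : Set (Set X) :=
  {S | ∃ x : X, S = ⋂₀ {A : Set X | (∀ π ∈ 𝒢, π ⁻¹' A = A) ∧ x ∈ A}}

/-!
For a permutation group the invariant atoms are the orbits. If `L` is strongly invariant, then
`L f = L f̄` for the group average `f̄ = (1/#𝒢) ∑ π, f ∘ π`, since `#𝒢 • (f - f̄)` and
`#𝒢 • (f̄ - f)` are sums of differences `f - f ∘ π`, resp. `f ∘ π - f`, on which `L` is
nonnegative; by orbit–stabilizer `f̄` is the orbit average of `f`, so `L₀ g := L (g ∘ atom)` works.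
Conversely, averaging over atoms is linear, dominates the infimum and is unchanged by `f ↦ f ∘ π`
(atoms are invariant), so `L₀ ∘ average` is coherent and `L (f - f ∘ π) = L₀ 0 = 0`.
-/

open Finset Function

theorem isGamble_of_finite {X : Type*} [Finite X] (f : X → ℝ) : IsGamble f :=
  ⟨(Set.finite_range f).bddAbove, (Set.finite_range f).bddBelow⟩

namespace IsCoherentLowerPrevision

variable {X : Type*} {L : (X → ℝ) → ℝ}

theorem map_zero (hL : IsCoherentLowerPrevision L) : L 0 = 0 := by
  have h0 : IsGamble (0 : X → ℝ) :=
    ⟨⟨0, by rintro _ ⟨_, rfl⟩; rfl⟩, ⟨0, by rintro _ ⟨_, rfl⟩; rfl⟩⟩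
  simpa using hL.2.2 0 h0 0 le_rfl

theorem sum_le_map_sum [Finite X] (hL : IsCoherentLowerPrevision L) {ι : Type*}
    (s : Finset ι) (g : ι → X → ℝ) : ∑ i ∈ s, L (g i) ≤ L (∑ i ∈ s, g i) := by
  classical
  induction s using Finset.induction_on with
  | empty => simp [hL.map_zero]
  | insert i s hi ih =>
    rw [sum_insert hi, sum_insert hi]
    exact (add_le_add le_rfl ih).trans
      (hL.2.1 _ _ (isGamble_of_finite _) (isGamble_of_finite _))

theorem eq_of_nonneg_sub [Finite X] (hL : IsCoherentLowerPrevision L) {f g : X → ℝ}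
    (hfg : 0 ≤ L (f - g)) (hgf : 0 ≤ L (g - f)) : L f = L g := by
  have h₁ := hL.2.1 g (f - g) (isGamble_of_finite _) (isGamble_of_finite _)
  have h₂ := hL.2.1 f (g - f) (isGamble_of_finite _) (isGamble_of_finite _)
  rw [add_sub_cancel] at h₁ h₂
  linarith

theorem nonneg_of_smul_eq_sum [Finite X] (hL : IsCoherentLowerPrevision L) {ι : Type*}
    {s : Finset ι} {g : ι → X → ℝ} {h : X → ℝ} {c : ℝ} (hc : 0 < c)
    (hg : ∀ i ∈ s, 0 ≤ L (g i)) (hsum : c • h = ∑ i ∈ s, g i) : 0 ≤ L h := by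
  have : 0 ≤ c * L h := by
    rw [← hL.2.2 h (isGamble_of_finite h) c hc.le, hsum]
    exact (sum_nonneg hg).trans (hL.sum_le_map_sum s g)
  exact nonneg_of_mul_nonneg_right this hc

theorem comp_surjective {Y : Type*} (hL : IsCoherentLowerPrevision L) {q : X → Y}
    (hq : Surjective q) : IsCoherentLowerPrevision fun g : Y → ℝ => L (g ∘ q) := by
  have hgamble : ∀ g : Y → ℝ, IsGamble g → IsGamble (g ∘ q) := fun g hg => by
    rwa [IsGamble, hq.range_comp]
  refine ⟨fun g hg => ?_, fun g g' hg hg' => ?_, fun g hg c hc => ?_⟩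
  · rw [← hq.range_comp]
    exact hL.1 _ (hgamble g hg)
  · exact hL.2.1 _ _ (hgamble g hg) (hgamble g' hg')
  · exact hL.2.2 _ (hgamble g hg) c hc

theorem comp_linearMap {Y : Type*} [Finite Y] [Nonempty Y] {L₀ : (Y → ℝ) → ℝ}
    (hL₀ : IsCoherentLowerPrevision L₀) (T : (X → ℝ) →ₗ[ℝ] (Y → ℝ))
    (hT : ∀ f y, sInf (Set.range f) ≤ T f y) :
    IsCoherentLowerPrevision fun f => L₀ (T f) := by
  refine ⟨fun f _ => ?_, fun f g _ _ => ?_, fun f _ c hc => ?_⟩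
  · exact (le_csInf (Set.range_nonempty _) (by rintro _ ⟨y, rfl⟩; exact hT f y)).trans
      (hL₀.1 _ (isGamble_of_finite _))
  · dsimp only
    rw [map_add]
    exact hL₀.2.1 _ _ (isGamble_of_finite _) (isGamble_of_finite _)
  · dsimp only
    rw [map_smul]
    exact hL₀.2.2 _ (isGamble_of_finite _) c hc

end IsCoherentLowerPrevision

section GroupAverage

variable {X : Type*} [Finite X] {𝒢 : Set (X → X)}

noncomputable def groupAverage (𝒢 : Set (X → X)) (f : X → ℝ) (x : X) : ℝ :=
  (∑ π ∈ 𝒢.toFinite.toFinset, f (π x)) / #𝒢.toFinite.toFinset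

/-- `#𝒢 • (f - groupAverage 𝒢 f)` is the sum of the `f - f ∘ π`, and symmetrically. -/
theorem IsCoherentLowerPrevision.map_groupAverage {L : (X → ℝ) → ℝ}
    (hL : IsCoherentLowerPrevision L) (h𝒢 : 𝒢.Nonempty)
    (hinv : ∀ f : X → ℝ, ∀ π ∈ 𝒢, 0 ≤ L (f - f ∘ π) ∧ 0 ≤ L (f ∘ π - f)) (f : X → ℝ) :
    L (groupAverage 𝒢 f) = L f := by
  have hcard : (0 : ℝ) < #𝒢.toFinite.toFinset := by
    exact_mod_cast (Set.Finite.toFinset_nonempty _).mpr h𝒢 |>.card_pos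
  have hmem : ∀ π ∈ 𝒢.toFinite.toFinset, π ∈ 𝒢 := fun π => (Set.Finite.mem_toFinset _).mp
  refine hL.eq_of_nonneg_sub
    (hL.nonneg_of_smul_eq_sum hcard (fun π hπ => (hinv f π (hmem π hπ)).2) ?_)
    (hL.nonneg_of_smul_eq_sum hcard (fun π hπ => (hinv f π (hmem π hπ)).1) ?_)
  all_goals
    ext x
    simp only [groupAverage, Pi.smul_apply, Pi.sub_apply, Finset.sum_apply, comp_apply,
      smul_eq_mul, sum_sub_distrib, sum_const, nsmul_eq_mul]
    field_simp

end GroupAverage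

section InvariantAtoms

variable {X : Type*} {𝒢 : Set (X → X)}

def atomOf (𝒢 : Set (X → X)) (x : X) : InvariantAtoms 𝒢 :=
  ⟨⋂₀ {A : Set X | (∀ π ∈ 𝒢, π ⁻¹' A = A) ∧ x ∈ A}, x, rfl⟩

theorem atomOf_surjective : Surjective (atomOf 𝒢) := by
  rintro ⟨_, x, rfl⟩
  exact ⟨x, rfl⟩

theorem mem_atomOf_self (x : X) : x ∈ (atomOf 𝒢 x : Set X) :=
  Set.mem_sInter.mpr fun _ hA => hA.2

theorem preimage_invariantAtom {π : X → X} (hπ : π ∈ 𝒢) (A : InvariantAtoms 𝒢) :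
    π ⁻¹' A = A := by
  obtain ⟨_, x, rfl⟩ := A
  ext y
  simp only [Set.mem_preimage, Set.mem_sInter]
  exact forall₂_congr fun B hB => by rw [← Set.mem_preimage, hB.1 π hπ]

theorem sum_comp_eq_of_preimage_eq {π : X → X} (hπ : Bijective π) {s : Set X} (hs : s.Finite)
    (hπs : π ⁻¹' s = s) (f : X → ℝ) : ∑ x ∈ hs.toFinset, f (π x) = ∑ x ∈ hs.toFinset, f x := by
  refine sum_nbij π (fun x hx => ?_) hπ.injective.injOn (fun y hy => ?_) fun _ _ => rfl
  · rw [Set.Finite.mem_toFinset] at hx ⊢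
    rwa [← Set.mem_preimage, hπs]
  · obtain ⟨x, rfl⟩ := hπ.surjective y
    refine ⟨x, ?_, rfl⟩
    rw [Set.Finite.coe_toFinset] at hy ⊢
    rwa [← hπs]

noncomputable def atomAverage [Finite X] (𝒢 : Set (X → X)) :
    (X → ℝ) →ₗ[ℝ] (InvariantAtoms 𝒢 → ℝ) where
  toFun f A := (∑ x ∈ A.1.toFinite.toFinset, f x) / (A.1.ncard : ℝ)
  map_add' f g := by
    ext A
    simp only [Pi.add_apply, sum_add_distrib, add_div]
  map_smul' c f := by
    ext A
    simp only [Pi.smul_apply, smul_eq_mul, ← mul_sum, mul_div_assoc, RingHom.id_apply]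

variable [Finite X]

theorem sInf_range_le_atomAverage (f : X → ℝ) (A : InvariantAtoms 𝒢) :
    sInf (Set.range f) ≤ atomAverage 𝒢 f A := by
  obtain ⟨x, hx⟩ : (A : Set X).Nonempty := by
    obtain ⟨_, x, rfl⟩ := A
    exact ⟨x, mem_atomOf_self x⟩
  have hcard : (0 : ℝ) < (A : Set X).ncard := by
    exact_mod_cast (Set.ncard_pos A.1.toFinite).mpr ⟨x, hx⟩
  have hsum := card_nsmul_le_sum A.1.toFinite.toFinset f (sInf (Set.range f))
    fun y _ => csInf_le (Set.finite_range f).bddBelow ⟨y, rfl⟩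
  rw [← Set.ncard_eq_toFinset_card, nsmul_eq_mul] at hsum
  exact (le_div_iff₀' hcard).mpr hsum

theorem atomAverage_comp {π : X → X} (hπ : π ∈ 𝒢) (hbij : Bijective π) (f : X → ℝ) :
    atomAverage 𝒢 (f ∘ π) = atomAverage 𝒢 f := by
  ext A
  exact congrArg (· / _) (sum_comp_eq_of_preimage_eq hbij _ (preimage_invariantAtom hπ A) f)

end InvariantAtoms

section PermutationGroup

variable {X : Type*} {𝒢 : Set (X → X)}

structure IsPermGroup (𝒢 : Set (X → X)) : Prop where
  id_mem : id ∈ 𝒢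
  comp_mem : ∀ π ∈ 𝒢, ∀ σ ∈ 𝒢, π ∘ σ ∈ 𝒢
  exists_inverse : ∀ π ∈ 𝒢, ∃ σ ∈ 𝒢, π ∘ σ = id ∧ σ ∘ π = id

def orbit (𝒢 : Set (X → X)) (x : X) : Set X := {y | ∃ π ∈ 𝒢, π x = y}

namespace IsPermGroup

theorem preimage_orbit (h𝒢 : IsPermGroup 𝒢) {π : X → X} (hπ : π ∈ 𝒢) (x : X) :
    π ⁻¹' orbit 𝒢 x = orbit 𝒢 x := by
  obtain ⟨π', hπ', -, hπ'π⟩ := h𝒢.exists_inverse π hπ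
  ext y
  constructor
  · rintro ⟨σ, hσ, hσy⟩
    exact ⟨π' ∘ σ, h𝒢.comp_mem _ hπ' _ hσ, by rw [comp_apply, hσy]; exact congrFun hπ'π y⟩
  · rintro ⟨σ, hσ, rfl⟩
    exact ⟨π ∘ σ, h𝒢.comp_mem _ hπ _ hσ, rfl⟩

theorem atomOf_eq_orbit (h𝒢 : IsPermGroup 𝒢) (x : X) : (atomOf 𝒢 x : Set X) = orbit 𝒢 x := by
  apply subset_antisymm
  · exact Set.sInter_subset_of_mem ⟨fun π hπ => h𝒢.preimage_orbit hπ x, id, h𝒢.id_mem, rfl⟩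
  · rintro _ ⟨π, hπ, rfl⟩
    show x ∈ π ⁻¹' (atomOf 𝒢 x : Set X)
    rw [preimage_invariantAtom hπ]
    exact mem_atomOf_self x

variable [Finite X]

open scoped Classical in
theorem card_filter_apply_eq (h𝒢 : IsPermGroup 𝒢) {x y : X} (hy : y ∈ orbit 𝒢 x) :
    #{π ∈ 𝒢.toFinite.toFinset | π x = y} = #{π ∈ 𝒢.toFinite.toFinset | π x = x} := by
  obtain ⟨σ, hσ, rfl⟩ := hy
  obtain ⟨σ', hσ', hσσ', hσ'σ⟩ := h𝒢.exists_inverse σ hσ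
  refine card_nbij' (σ' ∘ ·) (σ ∘ ·) ?_ ?_ ?_ ?_
  · intro ρ hρ
    simp only [coe_filter, Set.Finite.mem_toFinset] at hρ ⊢
    exact ⟨h𝒢.comp_mem _ hσ' _ hρ.1, by rw [comp_apply, hρ.2]; exact congrFun hσ'σ x⟩
  · intro π hπ
    simp only [coe_filter, Set.Finite.mem_toFinset] at hπ ⊢
    exact ⟨h𝒢.comp_mem _ hσ _ hπ.1, by rw [comp_apply, hπ.2]⟩
  · intro ρ _
    simp only [← comp_assoc, hσσ', id_comp]
  · intro π _
    simp only [← comp_assoc, hσ'σ, id_comp]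

open scoped Classical in
theorem sum_apply_eq_card_stabilizer_mul (h𝒢 : IsPermGroup 𝒢) (f : X → ℝ) (x : X) :
    ∑ π ∈ 𝒢.toFinite.toFinset, f (π x) =
      #{π ∈ 𝒢.toFinite.toFinset | π x = x} * ∑ y ∈ (orbit 𝒢 x).toFinite.toFinset, f y := by
  have hmaps : ∀ π ∈ 𝒢.toFinite.toFinset, π x ∈ (orbit 𝒢 x).toFinite.toFinset :=
    fun π hπ => (Set.Finite.mem_toFinset _).mpr ⟨π, (Set.Finite.mem_toFinset _).mp hπ, rfl⟩
  rw [← sum_fiberwise_of_maps_to hmaps, mul_sum]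
  refine sum_congr rfl fun y hy => ?_
  rw [sum_congr rfl fun π hπ => congrArg f (mem_filter.mp hπ).2, sum_const, nsmul_eq_mul,
    h𝒢.card_filter_apply_eq ((Set.Finite.mem_toFinset _).mp hy)]

theorem atomAverage_atomOf (h𝒢 : IsPermGroup 𝒢) (f : X → ℝ) (x : X) :
    atomAverage 𝒢 f (atomOf 𝒢 x) = groupAverage 𝒢 f x := by
  classical
  have hstab : (0 : ℝ) < #{π ∈ 𝒢.toFinite.toFinset | π x = x} := by
    have hid : id ∈ {π ∈ 𝒢.toFinite.toFinset | π x = x} :=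
      mem_filter.mpr ⟨(Set.Finite.mem_toFinset _).mpr h𝒢.id_mem, rfl⟩
    exact_mod_cast card_pos.mpr ⟨id, hid⟩
  have hcard := h𝒢.sum_apply_eq_card_stabilizer_mul (fun _ => 1) x
  simp only [sum_const, nsmul_eq_mul, mul_one] at hcard
  show (∑ y ∈ (atomOf 𝒢 x).1.toFinite.toFinset, f y) / (atomOf 𝒢 x).1.ncard = _
  generalize hA : (atomOf 𝒢 x : Set X) = A
  rw [h𝒢.atomOf_eq_orbit] at hA
  subst hA
  rw [groupAverage, h𝒢.sum_apply_eq_card_stabilizer_mul, hcard,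
    Set.ncard_eq_toFinset_card _ (orbit 𝒢 x).toFinite, mul_div_mul_left _ _ hstab.ne']

end IsPermGroup

end PermutationGroup

theorem stmt19 (X : Type*) [Fintype X] [Nonempty X] (𝒢 : Set (X → X))
    (hbij : ∀ π ∈ 𝒢, Function.Bijective π) (hid : id ∈ 𝒢)
    (hcomp : ∀ π ∈ 𝒢, ∀ σ ∈ 𝒢, π ∘ σ ∈ 𝒢)
    (hinvcl : ∀ π ∈ 𝒢, ∃ σ ∈ 𝒢, π ∘ σ = id ∧ σ ∘ π = id)
    (L : (X → ℝ) → ℝ) :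
    (IsCoherentLowerPrevision L ∧
      ∀ f : X → ℝ, ∀ π ∈ 𝒢, 0 ≤ L (f - f ∘ π) ∧ 0 ≤ L (f ∘ π - f)) ↔
    (∃ L₀ : (InvariantAtoms 𝒢 → ℝ) → ℝ, IsCoherentLowerPrevision L₀ ∧
      ∀ f : X → ℝ, L f = L₀ (fun A =>
        (∑ x ∈ A.1.toFinite.toFinset, f x) / (A.1.ncard : ℝ))) := by
  have h𝒢 : IsPermGroup 𝒢 := ⟨hid, hcomp, hinvcl⟩
  constructor
  · rintro ⟨hL, hinv⟩
    refine ⟨fun g => L (g ∘ atomOf 𝒢), hL.comp_surjective atomOf_surjective, fun f => ?_⟩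
    have havg : atomAverage 𝒢 f ∘ atomOf 𝒢 = groupAverage 𝒢 f :=
      funext (h𝒢.atomAverage_atomOf f)
    exact (hL.map_groupAverage ⟨id, hid⟩ hinv f).symm.trans (congrArg L havg.symm)
  · rintro ⟨L₀, hL₀, hrep⟩
    have : Nonempty (InvariantAtoms 𝒢) := .map (atomOf 𝒢) ‹_›
    obtain rfl : L = fun f => L₀ (atomAverage 𝒢 f) := funext hrep
    refine ⟨hL₀.comp_linearMap _ sInf_range_le_atomAverage, fun f π hπ => ?_⟩
    simp only [map_sub, atomAverage_comp hπ (hbij π hπ), sub_self, hL₀.map_zero, le_refl, and_self]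
end
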